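/- Fix real parameters γ, α with γ > 1 and α > 0 and reals n_x, n_y with n_x² + n_y² = 1. For Φ = (φ₁,φ₂,φ₃,φ₄) ∈ ℝ⁴ with φ₁ ≠ 0, set u = φ₂/φ₁, v = φ₃/φ₁, u_n = n_x u + n_y v, u_τ = −n_y u + n_x v, Φ_r = (φ₁, φ₁ u_n, φ₁ u_τ, φ₄), and let Ã(Φ) = [[α²u, 0, 0, 0],[0, ((γ−1)/2)u, 0, 0],[0, 0, ((γ−1)/2)u, 0],[0, 2(γ−1)φ₄/φ₁, 0, (2−γ)u]], B̃(Φ) = [[α²v, 0, 0, 0],[0, ((γ−1)/2)v, 0, 0],[0, 0, ((γ−1)/2)v, 0],[0, 0, 2(γ−1)φ₄/φ₁, (2−γ)v]], and M_rot = [[α² u_n, 0, 0, 0],[0, ((γ−1)/2) u_n, 0, (γ−1) φ₄/φ₁],[0, 0, ((γ−1)/2) u_n, 0],[0, (γ−1) φ₄/φ₁, 0, (2−γ) u_n]]. Then Φᵀ ( n_x Ã(Φ) + n_y B̃(Φ) ) Φ = Φ_rᵀ M_rot Φ_r. -/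
import Mathlib


open Matrix

/-- The derived matrix `Ã(Φ)` with free parameters set to zero. -/
noncomputable def matAtil0 (γ α : ℝ) (φ : Fin 4 → ℝ) : Matrix (Fin 4) (Fin 4) ℝ :=
  let u := φ 1 / φ 0
  let q := φ 3 / φ 0
  !![α ^ 2 * u, 0, 0, 0;
     0, (γ - 1) / 2 * u, 0, 0;
     0, 0, (γ - 1) / 2 * u, 0;
     0, 2 * (γ - 1) * q, 0, (2 - γ) * u]

/-- The derived matrix `B̃(Φ)` with free parameters set to zero. -/
noncomputable def matBtil0 (γ α : ℝ) (φ : Fin 4 → ℝ) : Matrix (Fin 4) (Fin 4) ℝ :=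
  let v := φ 2 / φ 0
  let q := φ 3 / φ 0
  !![α ^ 2 * v, 0, 0, 0;
     0, (γ - 1) / 2 * v, 0, 0;
     0, 0, (γ - 1) / 2 * v, 0;
     0, 0, 2 * (γ - 1) * q, (2 - γ) * v]

/-- The rotated boundary matrix `M_rot` with normal velocity `μ` and `q = φ₄/φ₁`. -/
noncomputable def matMrot (γ α μ q : ℝ) : Matrix (Fin 4) (Fin 4) ℝ :=
  !![α ^ 2 * μ, 0, 0, 0;
     0, (γ - 1) / 2 * μ, 0, (γ - 1) * q;
     0, 0, (γ - 1) / 2 * μ, 0;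
     0, (γ - 1) * q, 0, (2 - γ) * μ]

/-- **The rotated boundary contraction:** with unit outward normal `(n_x, n_y)`, normal
velocity `u_n`, tangential velocity `u_τ` and rotated solution `Φ_r = (φ₁, φ₁u_n, φ₁u_τ, φ₄)`,
one has `Φᵀ (n_x Ã + n_y B̃) Φ = Φ_rᵀ M_rot Φ_r`. -/
theorem stmt_10 (γ α nx ny : ℝ) (hγ : 1 < γ) (hα : 0 < α) (hn : nx ^ 2 + ny ^ 2 = 1)
    (Φ : Fin 4 → ℝ) (hφ1 : Φ 0 ≠ 0) :
    let u := Φ 1 / Φ 0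
    let v := Φ 2 / Φ 0
    let un := nx * u + ny * v
    let uτ := -ny * u + nx * v
    let Φr : Fin 4 → ℝ := ![Φ 0, Φ 0 * un, Φ 0 * uτ, Φ 3]
    Φ ⬝ᵥ (nx • matAtil0 γ α Φ + ny • matBtil0 γ α Φ).mulVec Φ
      = Φr ⬝ᵥ (matMrot γ α un (Φ 3 / Φ 0)).mulVec Φr := by
  intro u v un uτ Φr
  have h1 : Φ 1 = Φ 0 * u := (mul_div_cancel₀ _ hφ1).symm
  have h2 : Φ 2 = Φ 0 * v := (mul_div_cancel₀ _ hφ1).symm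
  have h3 : Φ 3 = Φ 0 * (Φ 3 / Φ 0) := (mul_div_cancel₀ _ hφ1).symm
  simp only [matAtil0, matBtil0, matMrot]
  simp only [dotProduct, Matrix.mulVec, Fin.sum_univ_four, Matrix.add_apply,
    Matrix.smul_apply, smul_eq_mul, Matrix.cons_val_zero, Matrix.cons_val_one,
    Matrix.head_cons, Matrix.cons_val_two, Matrix.tail_cons, Matrix.cons_val_three,
    Matrix.of_apply, Matrix.cons_val', Matrix.empty_val', Matrix.cons_val_fin_one,
    Matrix.head_fin_const, Φr]
  set q := Φ 3 / Φ 0 with hq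
  rw [show Φ 1 / Φ 0 = u from rfl, show Φ 2 / Φ 0 = v from rfl, h1, h2, h3]
  rw [show un = nx * u + ny * v from rfl, show uτ = -ny * u + nx * v from rfl]
  linear_combination (-((γ - 1) / 2 * (nx * u + ny * v) * Φ 0 ^ 2 * (u ^ 2 + v ^ 2))) * hn
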